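/- Let 𝓙 ⊆ 𝒫(V) be a nonempty antichain of nonempty subsets of V. For every bounded measurable f : X → ℝ, |∫_X f dμ| ≤ ‖f‖_{U^{V,𝓙}}. -/

import Mathlib

/-!
Fix `J ∈ 𝓙` and write `x = (y, x_J)` with `y = x_{V∖J}`. On the product `∏_{j ∈ J} X_j` the
Gowers–Cauchy–Schwarz inequality `(∫ g)^{2^|J|} ≤ ∫ ∏_ω g(x^ω)` holds: double the coordinates
one at a time, and at each step integrate out the new coordinate, after which the step is
Cauchy–Schwarz. Applied to `g = f(y, ·)` and combined with Jensen in `y`, this gives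
`|∫ f| ≤ ‖f‖_{U^{V,J}}`. The weighted geometric mean over `𝓙` is then still at least `|∫ f|`,
and summing over a decomposition `f = Σ f_i` bounds `|∫ f|` by the cost of that decomposition.
-/

open MeasureTheory
open scoped Classical

noncomputable section

/-- Recombine `(x_{V∖J}, x_J^ω)` into a point of `X = ∏_v X_v`. -/
def recomb {V : Type} (X : V → Type) (J : Set V)
    (y : ∀ v : ↥(Jᶜ : Set V), X ↑v) (z : ∀ p : ↥J × Bool, X ↑p.1)
    (ω : ↥J → Bool) : ∀ v, X v := fun v =>
  if h : v ∈ J then z (⟨v, h⟩, ω ⟨v, h⟩) else y ⟨v, h⟩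

/-- The integral `∫_{X⁺_J} ∏_{ω ∈ {0,1}^J} f(x_{V∖J}, x_J^ω) dμ⁺_J`. -/
def UJint {V : Type} [Fintype V] [DecidableEq V] (X : V → Type)
    [∀ v, MeasurableSpace (X v)] (μ : ∀ v, Measure (X v)) (J : Set V)
    (f : (∀ v, X v) → ℝ) : ℝ :=
  ∫ p : (∀ v : ↥(Jᶜ : Set V), X ↑v) × (∀ q : ↥J × Bool, X ↑q.1),
    ∏ ω : ↥J → Bool, f (recomb X J p.1 p.2 ω)
    ∂((Measure.pi fun v : ↥(Jᶜ : Set V) => μ ↑v).prod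
      (Measure.pi fun q : ↥J × Bool => μ ↑q.1))

/-- The seminorm `‖f‖_{U^{V,J}} = (UJint f)^{1/2^{|J|}}`. -/
def UJnorm {V : Type} [Fintype V] [DecidableEq V] (X : V → Type)
    [∀ v, MeasurableSpace (X v)] (μ : ∀ v, Measure (X v)) (J : Set V)
    (f : (∀ v, X v) → ℝ) : ℝ :=
  (UJint X μ J f) ^ ((1 : ℝ) / 2 ^ J.ncard)

/-- The seminorm `‖f‖_{U^{V,𝓙}}`, an infimum over decompositions `f = Σ_i f_i` into
bounded measurable pieces. -/
def UFamNorm {V : Type} [Fintype V] [DecidableEq V] (X : V → Type)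
    [∀ v, MeasurableSpace (X v)] (μ : ∀ v, Measure (X v)) (𝓙 : Finset (Set V))
    (f : (∀ v, X v) → ℝ) : ℝ :=
  sInf {r : ℝ | ∃ (m : ℕ) (g : ℕ → (∀ v, X v) → ℝ),
    (∀ i, (∃ C, ∀ x, |g i x| ≤ C) ∧ Measurable (g i)) ∧
    (∀ x, f x = ∑ i ∈ Finset.range (m + 1), g i x) ∧
    r = ∑ i ∈ Finset.range (m + 1),
        (∏ J ∈ 𝓙, UJnorm X μ J (g i) ^ (2 ^ J.ncard)) ^
          ((1 : ℝ) / ∑ J ∈ 𝓙, (2 : ℝ) ^ J.ncard)}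

open Function

section UpdateFubini

variable {ι : Type*} [Fintype ι] [DecidableEq ι] {Y : ι → Type*} [∀ i, MeasurableSpace (Y i)]
  (ν : ∀ i, Measure (Y i)) [∀ i, SigmaFinite (ν i)] (k : ι) [IsProbabilityMeasure (ν k)]

theorem measurePreserving_update :
    MeasurePreserving (fun p : (∀ i, Y i) × Y k => update p.1 k p.2)
      ((Measure.pi ν).prod (ν k)) (Measure.pi ν) := by
  refine ⟨measurable_update', (Measure.pi_eq fun s hs => ?_).symm⟩
  have hpre : (fun p : (∀ i, Y i) × Y k => update p.1 k p.2) ⁻¹' Set.univ.pi s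
      = Set.univ.pi (update s k Set.univ) ×ˢ s k := by
    ext ⟨z, t⟩
    simp only [Set.mem_preimage, Set.mem_univ_pi, Set.mem_prod]
    rw [forall_update_iff z (p := fun i x => x ∈ s i),
      forall_update_iff s (p := fun i u => z i ∈ u)]
    simp [and_comm]
  rw [Measure.map_apply measurable_update' (.univ_pi hs), hpre, Measure.prod_prod,
    Measure.pi_pi, ← Finset.prod_erase_mul _ _ (Finset.mem_univ k),
    ← Finset.prod_erase_mul _ _ (Finset.mem_univ k)]
  simp only [update_self, measure_univ, mul_one]
  exact congrArg (· * _) (Finset.prod_congr rfl fun i hi => by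
    rw [update_of_ne (Finset.ne_of_mem_erase hi)])

theorem integral_eq_integral_integral_update {E : Type*} [NormedAddCommGroup E]
    [NormedSpace ℝ E] {g : (∀ i, Y i) → E} (hg : Integrable g (Measure.pi ν)) :
    ∫ z, g z ∂Measure.pi ν = ∫ z, ∫ t, g (update z k t) ∂ν k ∂Measure.pi ν := by
  have h := measurePreserving_update ν k
  calc ∫ z, g z ∂Measure.pi ν = ∫ p, g (update p.1 k p.2) ∂(Measure.pi ν).prod (ν k) := by
        rw [← integral_map h.measurable.aemeasurable (by rw [h.map_eq]; exact hg.1), h.map_eq]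
    _ = _ := integral_prod _ (h.integrable_comp_of_integrable hg)

end UpdateFubini

theorem integral_eq_integral_integral_piEquivPiSubtypeProd_symm {ι : Type*} [Fintype ι]
    {Y : ι → Type*} [∀ i, MeasurableSpace (Y i)] (ν : ∀ i, Measure (Y i))
    [∀ i, SigmaFinite (ν i)] (p : ι → Prop) [DecidablePred p] {E : Type*}
    [NormedAddCommGroup E] [NormedSpace ℝ E] {g : (∀ i, Y i) → E}
    (hg : Integrable g (Measure.pi ν)) :
    ∫ x, g x ∂Measure.pi ν = ∫ y, ∫ x, g ((MeasurableEquiv.piEquivPiSubtypeProd Y p).symm (x, y))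
      ∂(Measure.pi fun i : Subtype p => ν i) ∂(Measure.pi fun i : {i // ¬p i} => ν i) := by
  have h := (measurePreserving_piEquivPiSubtypeProd ν p).symm
  rw [← h.integral_comp']
  exact integral_prod_symm _ (h.integrable_comp_of_integrable hg)

theorem Measurable.integrable_of_abs_le {α : Type*} [MeasurableSpace α] {μ : Measure α}
    [IsFiniteMeasure μ] {g : α → ℝ} (hg : Measurable g) {C : ℝ} (hC : ∀ x, |g x| ≤ C) :
    Integrable g μ :=
  .of_bound hg.aestronglyMeasurable C (ae_of_all _ hC)

theorem abs_integral_le_of_abs_le {α : Type*} [MeasurableSpace α] {μ : Measure α}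
    [IsProbabilityMeasure μ] {g : α → ℝ} {C : ℝ} (hC : ∀ x, |g x| ≤ C) :
    |∫ x, g x ∂μ| ≤ C := by
  simpa using norm_integral_le_of_norm_le_const (μ := μ) (f := g) (ae_of_all _ hC)

theorem pow_integral_le_integral_pow {α : Type*} [MeasurableSpace α] {μ : Measure α}
    [IsProbabilityMeasure μ] {n : ℕ} (hn : Even n) {G : α → ℝ} (hG : Integrable G μ)
    (hGn : Integrable (fun x => G x ^ n) μ) : (∫ x, G x ∂μ) ^ n ≤ ∫ x, G x ^ n ∂μ :=
  hn.convexOn_pow.map_integral_le (continuous_pow n).continuousOn isClosed_univ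
    (ae_of_all _ fun _ => Set.mem_univ _) hG hGn

theorem le_rpow_one_div_of_pow_le {a b : ℝ} {n : ℕ} (ha : 0 ≤ a) (hn : n ≠ 0) (h : a ^ n ≤ b) :
    a ≤ b ^ (1 / (n : ℝ)) := by
  rw [one_div, Real.le_rpow_inv_iff_of_pos ha ((pow_nonneg ha n).trans h) (by positivity),
    Real.rpow_natCast]
  exact h

section Cube

variable {ι : Type*} {Y : ι → Type*}

/-- A point `z` of `∏_{(i, b) ∈ ι × Bool} Y i` carries `2 ^ |ι|` points of `∏_i Y i`, one for
each vertex `ω` of the discrete cube. -/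
def cubeVertex (ω : ι → Bool) (z : ∀ q : ι × Bool, Y q.1) : ∀ i, Y i := fun i => z (i, ω i)

abbrev cubeMeasure [Fintype ι] [∀ i, MeasurableSpace (Y i)] (ν : ∀ i, Measure (Y i)) :
    Measure (∀ q : ι × Bool, Y q.1) :=
  Measure.pi fun q => ν q.1

theorem measurable_cubeVertex [∀ i, MeasurableSpace (Y i)] (ω : ι → Bool) :
    Measurable (cubeVertex (Y := Y) ω) :=
  measurable_pi_lambda _ fun _ => measurable_pi_apply _

theorem measurePreserving_cubeVertex [Fintype ι] [∀ i, MeasurableSpace (Y i)]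
    (ν : ∀ i, Measure (Y i)) [∀ i, IsProbabilityMeasure (ν i)] (ω : ι → Bool) :
    MeasurePreserving (cubeVertex ω) (cubeMeasure ν) (Measure.pi ν) := by
  refine ⟨measurable_cubeVertex ω, (Measure.pi_eq fun s hs => ?_).symm⟩
  have hpre : cubeVertex ω ⁻¹' Set.univ.pi s =
      Set.univ.pi fun q : ι × Bool => if q.2 = ω q.1 then s q.1 else Set.univ := by
    ext z
    simp only [Set.mem_preimage, Set.mem_univ_pi, cubeVertex, Prod.forall]
    refine ⟨fun h i b => ?_, fun h i => by simpa using h i (ω i)⟩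
    split_ifs with hb
    · exact hb ▸ h i
    · trivial
  rw [Measure.map_apply (measurable_cubeVertex ω) (.univ_pi hs), hpre, Measure.pi_pi,
    Fintype.prod_prod_type]
  refine Finset.prod_congr rfl fun i _ => ?_
  cases h : ω i <;> simp [h]

theorem cubeVertex_update_of_ne [DecidableEq ι] {ω : ι → Bool} {q : ι × Bool}
    (h : ω q.1 ≠ q.2) (z : ∀ q : ι × Bool, Y q.1) (t : Y q.1) :
    cubeVertex ω (update z q t) = cubeVertex ω z :=
  funext fun _ => update_of_ne (fun e => h (by subst e; rfl)) _ _

variable [DecidableEq ι]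

/-- The product of `f` over the vertices of the face `{ω | ω = false off S}` of the cube; the
vertex `ω` is indexed by `T = {i | ω i = true} ⊆ S`. -/
def faceProd (f : (∀ i, Y i) → ℝ) (S : Finset ι) (z : ∀ q : ι × Bool, Y q.1) : ℝ :=
  ∏ T ∈ S.powerset, f (cubeVertex (fun i => decide (i ∈ T)) z)

theorem abs_faceProd_le {f : (∀ i, Y i) → ℝ} {C : ℝ} (hC : ∀ x, |f x| ≤ C) (S : Finset ι)
    (z : ∀ q : ι × Bool, Y q.1) : |faceProd f S z| ≤ C ^ 2 ^ S.card := by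
  rw [faceProd, Finset.abs_prod, ← Finset.card_powerset, ← Finset.prod_const]
  exact Finset.prod_le_prod (fun _ _ => abs_nonneg _) fun _ _ => hC _

variable {f : (∀ i, Y i) → ℝ} {S : Finset ι} {i : ι}

theorem faceProd_univ [Fintype ι] (z : ∀ q : ι × Bool, Y q.1) :
    faceProd f Finset.univ z = ∏ ω : ι → Bool, f (cubeVertex ω z) := by
  rw [faceProd, Finset.powerset_univ]
  exact Finset.prod_nbij' (fun T i => decide (i ∈ T)) (fun ω => ({i | ω i = true} : Finset ι))
    (by simp) (by simp) (by simp) (by simp) (by simp)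

theorem faceProd_update_true (hi : i ∉ S) (z : ∀ q : ι × Bool, Y q.1) (t : Y i) :
    faceProd f S (update z (i, true) t) = faceProd f S z :=
  Finset.prod_congr rfl fun T hT => by
    rw [cubeVertex_update_of_ne]
    simpa using fun h => hi (Finset.mem_powerset.1 hT h)

theorem faceProd_insert (hi : i ∉ S) (z : ∀ q : ι × Bool, Y q.1) :
    faceProd f (insert i S) z
      = faceProd f S z * faceProd f S (update z (i, false) (z (i, true))) := by
  rw [faceProd, Finset.prod_powerset_insert hi]
  refine congrArg _ (Finset.prod_congr rfl fun T hT => congrArg f (funext fun j => ?_))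
  have hiT : i ∉ T := fun h => hi (Finset.mem_powerset.1 hT h)
  rcases eq_or_ne j i with rfl | hj
  · rw [cubeVertex, cubeVertex, show decide (j ∈ insert j T) = true by simp,
      show decide (j ∈ T) = false by simpa, update_self]
  · rw [cubeVertex, cubeVertex, show decide (j ∈ insert i T) = decide (j ∈ T) by simp [hj],
      update_of_ne (by simp [hj])]

theorem faceProd_insert_update_true (hi : i ∉ S) (z : ∀ q : ι × Bool, Y q.1) (t : Y i) :
    faceProd f (insert i S) (update z (i, true) t)
      = faceProd f S z * faceProd f S (update z (i, false) t) := by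
  rw [faceProd_insert hi, faceProd_update_true hi, update_self,
    update_comm (show ((i, true) : ι × Bool) ≠ (i, false) by simp), faceProd_update_true hi]

variable [∀ i, MeasurableSpace (Y i)]

theorem measurable_faceProd (hf : Measurable f) (S : Finset ι) : Measurable (faceProd f S) :=
  Finset.measurable_prod _ fun _ _ => hf.comp (measurable_cubeVertex _)

variable [Fintype ι] (ν : ∀ i, Measure (Y i)) [∀ i, IsProbabilityMeasure (ν i)]

theorem integral_faceProd_empty (hf : Measurable f) :
    ∫ z, faceProd f ∅ z ∂cubeMeasure ν = ∫ x, f x ∂Measure.pi ν := by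
  rw [← (measurePreserving_cubeVertex ν fun _ => false).map_eq,
    integral_map (measurable_cubeVertex _).aemeasurable hf.aestronglyMeasurable]
  simp [faceProd]

theorem sq_integral_faceProd_le (hf : Measurable f) {C : ℝ} (hC : ∀ x, |f x| ≤ C)
    (hi : i ∉ S) :
    (∫ z, faceProd f S z ∂cubeMeasure ν) ^ 2 ≤ ∫ z, faceProd f (insert i S) z ∂cubeMeasure ν := by
  set P := faceProd f S
  set G : (∀ q : ι × Bool, Y q.1) → ℝ := fun z => ∫ t, P (update z (i, false) t) ∂ν i
  have hPm : Measurable P := measurable_faceProd hf S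
  have hPb : ∀ z, |P z| ≤ C ^ 2 ^ S.card := abs_faceProd_le hC S
  have hPi : Integrable P (cubeMeasure ν) := hPm.integrable_of_abs_le hPb
  have hGm : Measurable G := (hPm.comp (measurable_update' (a := (i, false)))).stronglyMeasurable
    |>.integral_prod_right'.measurable
  have hGb : ∀ z, |G z| ≤ C ^ 2 ^ S.card := fun z => abs_integral_le_of_abs_le fun _ => hPb _
  have hGi : Integrable G (cubeMeasure ν) := hGm.integrable_of_abs_le hGb
  have hGG : Integrable (fun z => G z * G z) (cubeMeasure ν) :=
    hGi.mul_bdd hGm.aestronglyMeasurable (ae_of_all _ hGb)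
  -- Averaging out the coordinate `(i, true)` turns the integrand into `P * G`, and then averaging
  -- out `(i, false)` turns it into `G ^ 2`.
  have h₁ : ∫ z, P z ∂cubeMeasure ν = ∫ z, G z ∂cubeMeasure ν :=
    integral_eq_integral_integral_update _ (i, false) hPi
  have h₂ : ∫ z, faceProd f (insert i S) z ∂cubeMeasure ν = ∫ z, P z * G z ∂cubeMeasure ν := by
    rw [integral_eq_integral_integral_update _ (i, true)
      ((measurable_faceProd hf _).integrable_of_abs_le (abs_faceProd_le hC _))]
    simp_rw [faceProd_insert_update_true hi, integral_const_mul]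
    rfl
  have h₃ : ∫ z, P z * G z ∂cubeMeasure ν = ∫ z, G z ^ 2 ∂cubeMeasure ν := by
    rw [integral_eq_integral_integral_update _ (i, false)
      (hPi.mul_bdd hGm.aestronglyMeasurable (ae_of_all _ hGb))]
    simp_rw [G, update_idem, integral_mul_const, sq]
  rw [h₁, h₂, h₃]
  exact pow_integral_le_integral_pow even_two hGi (by simpa only [sq] using hGG)

theorem pow_abs_integral_le_integral_faceProd (hf : Measurable f) {C : ℝ}
    (hC : ∀ x, |f x| ≤ C) (hS : S.Nonempty) :
    |∫ x, f x ∂Measure.pi ν| ^ 2 ^ S.card ≤ ∫ z, faceProd f S z ∂cubeMeasure ν := by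
  induction hS using Finset.Nonempty.cons_induction with
  | singleton i =>
    simpa [sq_abs, integral_faceProd_empty ν hf] using
      sq_integral_faceProd_le ν hf hC (Finset.notMem_empty i)
  | cons i S hi _ ih =>
    rw [Finset.card_cons, pow_succ, pow_mul, Finset.cons_eq_insert]
    exact (pow_le_pow_left₀ (by positivity) ih 2).trans (sq_integral_faceProd_le ν hf hC hi)

theorem pow_abs_integral_le_integral_prod_cubeVertex [Nonempty ι] (hf : Measurable f) {C : ℝ}
    (hC : ∀ x, |f x| ≤ C) :
    |∫ x, f x ∂Measure.pi ν| ^ 2 ^ Fintype.card ι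
      ≤ ∫ z, ∏ ω : ι → Bool, f (cubeVertex ω z) ∂cubeMeasure ν := by
  simpa [faceProd_univ] using pow_abs_integral_le_integral_faceProd ν hf hC Finset.univ_nonempty

end Cube

section UJ

variable {V : Type} [Fintype V] [DecidableEq V] {X : V → Type} [∀ v, MeasurableSpace (X v)]
  (μ : ∀ v, Measure (X v)) [∀ v, IsProbabilityMeasure (μ v)] {J : Set V} {f : (∀ v, X v) → ℝ}

theorem integrable_prod_recomb (hf : Measurable f) {C : ℝ} (hC : ∀ x, |f x| ≤ C) :
    Integrable (fun p => ∏ ω : J → Bool, f (recomb X J p.1 p.2 ω))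
      ((Measure.pi fun v : ↥Jᶜ => μ v).prod (cubeMeasure fun j : J => μ j)) := by
  -- `recomb X J y z ω` is definitionally `e.symm (cubeVertex ω z, y)`.
  set e := MeasurableEquiv.piEquivPiSubtypeProd X (· ∈ J)
  refine Measurable.integrable_of_abs_le (C := C ^ 2 ^ Fintype.card J)
    (Finset.measurable_prod _ fun ω _ => hf.comp <| e.symm.measurable.comp
      (((measurable_cubeVertex ω).comp measurable_snd).prodMk measurable_fst)) fun p => ?_
  have h := abs_faceProd_le (fun x => hC (e.symm (x, p.1))) Finset.univ p.2
  rwa [faceProd_univ, Finset.card_univ] at h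

theorem pow_abs_integral_le_UJint (hJ : J.Nonempty) (hf : Measurable f) {C : ℝ}
    (hC : ∀ x, |f x| ≤ C) : |∫ x, f x ∂Measure.pi μ| ^ 2 ^ J.ncard ≤ UJint X μ J f := by
  have : Nonempty J := hJ.to_subtype
  set κ := Measure.pi fun v : ↥Jᶜ => μ v
  set e := MeasurableEquiv.piEquivPiSubtypeProd X (· ∈ J)
  have hfe : Measurable fun p => f (e.symm p) := hf.comp e.symm.measurable
  set H : (∀ v : ↥Jᶜ, X v) → ℝ := fun y => ∫ x, f (e.symm (x, y)) ∂Measure.pi fun j : J => μ j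
  have hHm : Measurable H := hfe.stronglyMeasurable.integral_prod_left'.measurable
  have hHb : ∀ y, |H y| ≤ C := fun y => abs_integral_le_of_abs_le fun _ => hC _
  have hHi : Integrable (fun y => H y ^ 2 ^ J.ncard) κ :=
    (hHm.pow_const _).integrable_of_abs_le fun y => by
      rw [abs_pow]; exact pow_le_pow_left₀ (abs_nonneg _) (hHb y) _
  have hF := integrable_prod_recomb (J := J) μ hf hC
  have heven : Even (2 ^ J.ncard) :=
    (Nat.even_pow' ((Set.ncard_pos J.toFinite).2 hJ).ne').2 even_two
  have hcube : ∀ y, H y ^ 2 ^ J.ncard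
      ≤ ∫ z, ∏ ω : J → Bool, f (recomb X J y z ω) ∂cubeMeasure fun j : J => μ j := fun y => by
    -- the integrand on the right is definitionally `∏ ω, f (e.symm (cubeVertex ω z, y))`
    rw [← heven.pow_abs, ← Nat.card_coe_set_eq, Nat.card_eq_fintype_card]
    exact pow_abs_integral_le_integral_prod_cubeVertex (fun j : J => μ j)
      (hfe.comp measurable_prodMk_right) fun _ => hC _
  calc |∫ x, f x ∂Measure.pi μ| ^ 2 ^ J.ncard = (∫ y, H y ∂κ) ^ 2 ^ J.ncard := by
        rw [heven.pow_abs, integral_eq_integral_integral_piEquivPiSubtypeProd_symm μ (· ∈ J)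
          (hf.integrable_of_abs_le hC)]
        rfl
    _ ≤ ∫ y, H y ^ 2 ^ J.ncard ∂κ :=
        pow_integral_le_integral_pow heven (hHm.integrable_of_abs_le hHb) hHi
    _ ≤ _ := integral_mono hHi hF.integral_prod_left hcube
    _ = UJint X μ J f := (integral_prod _ hF).symm

theorem abs_integral_le_UJnorm (hJ : J.Nonempty) (hf : Measurable f) {C : ℝ}
    (hC : ∀ x, |f x| ≤ C) : |∫ x, f x ∂Measure.pi μ| ≤ UJnorm X μ J f := by
  have h := le_rpow_one_div_of_pow_le (abs_nonneg _) (by positivity)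
    (pow_abs_integral_le_UJint μ hJ hf hC)
  rwa [Nat.cast_pow, Nat.cast_ofNat] at h

theorem abs_integral_le_prod_UJnorm_rpow {𝓙 : Finset (Set V)} (h𝓙 : 𝓙.Nonempty)
    (h𝓙ne : ∀ J ∈ 𝓙, J.Nonempty) (hf : Measurable f) {C : ℝ} (hC : ∀ x, |f x| ≤ C) :
    |∫ x, f x ∂Measure.pi μ| ≤ (∏ J ∈ 𝓙, UJnorm X μ J f ^ (2 ^ J.ncard)) ^
      ((1 : ℝ) / ∑ J ∈ 𝓙, (2 : ℝ) ^ J.ncard) := by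
  have hpow : |∫ x, f x ∂Measure.pi μ| ^ (∑ J ∈ 𝓙, 2 ^ J.ncard)
      ≤ ∏ J ∈ 𝓙, UJnorm X μ J f ^ 2 ^ J.ncard := by
    rw [← Finset.prod_pow_eq_pow_sum]
    exact Finset.prod_le_prod (fun _ _ => by positivity) fun J hJ =>
      pow_le_pow_left₀ (abs_nonneg _) (abs_integral_le_UJnorm μ (h𝓙ne J hJ) hf hC) _
  simpa only [Nat.cast_sum, Nat.cast_pow, Nat.cast_ofNat] using
    le_rpow_one_div_of_pow_le (abs_nonneg _) (Finset.sum_pos (fun J _ => by positivity) h𝓙).ne'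
      hpow

end UJ

theorem abs_integral_le_UFamNorm_general (V : Type) [Fintype V] [DecidableEq V]
    (X : V → Type) [∀ v, MeasurableSpace (X v)]
    (μ : ∀ v, Measure (X v)) [∀ v, IsProbabilityMeasure (μ v)]
    (𝓙 : Finset (Set V)) (h𝓙 : 𝓙.Nonempty)
    (h𝓙ne : ∀ J ∈ 𝓙, J.Nonempty)
    (f : (∀ v, X v) → ℝ) (hfb : ∃ C, ∀ x, |f x| ≤ C) (hfm : Measurable f) :
    |∫ x, f x ∂(Measure.pi μ)| ≤ UFamNorm X μ 𝓙 f := by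
  obtain ⟨C, hC⟩ := hfb
  refine le_csInf ⟨_, 0, fun _ => f, fun _ => ⟨⟨C, hC⟩, hfm⟩, fun x => by simp, rfl⟩ ?_
  rintro r ⟨m, g, hg, hsum, rfl⟩
  have hgi : ∀ i, Integrable (g i) (Measure.pi μ) := fun i =>
    (hg i).2.integrable_of_abs_le (hg i).1.choose_spec
  calc |∫ x, f x ∂Measure.pi μ| = |∑ i ∈ Finset.range (m + 1), ∫ x, g i x ∂Measure.pi μ| := by
        rw [← integral_finsetSum _ fun i _ => hgi i]
        simp_rw [← hsum]
    _ ≤ ∑ i ∈ Finset.range (m + 1), |∫ x, g i x ∂Measure.pi μ| := Finset.abs_sum_le_sum_abs _ _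
    _ ≤ _ := Finset.sum_le_sum fun i _ =>
        abs_integral_le_prod_UJnorm_rpow μ h𝓙 h𝓙ne (hg i).2 (hg i).1.choose_spec

/-- For a nonempty antichain `𝓙` of nonempty subsets of `V` and bounded measurable `f`,
`|∫ f dμ| ≤ ‖f‖_{U^{V,𝓙}}`. -/
theorem abs_integral_le_UFamNorm (V : Type) [Fintype V] [DecidableEq V] [Nonempty V]
    (X : V → Type) [∀ v, MeasurableSpace (X v)]
    (μ : ∀ v, Measure (X v)) [∀ v, IsProbabilityMeasure (μ v)]
    (𝓙 : Finset (Set V)) (h𝓙 : 𝓙.Nonempty)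
    (h𝓙ne : ∀ J ∈ 𝓙, J.Nonempty)
    (h𝓙anti : ∀ J ∈ 𝓙, ∀ J' ∈ 𝓙, J ⊆ J' → J = J')
    (f : (∀ v, X v) → ℝ) (hfb : ∃ C, ∀ x, |f x| ≤ C) (hfm : Measurable f) :
    |∫ x, f x ∂(Measure.pi μ)| ≤ UFamNorm X μ 𝓙 f :=
  abs_integral_le_UFamNorm_general V X μ 𝓙 h𝓙 h𝓙ne f hfb hfm

end
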